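/- Let H be a symmetric d×d matrix with λ_min(H) < 0, let m ≥ d, and suppose 0 < α_min ≤ α_max with α_max |H_{jj}| < 1 for all j. Then there exists c ∈ (0,1), depending only on m, H, α_min, α_max, such that for any sequence x_{t+1} = (I − α_t e_{i_t} e_{i_t}ᵀ H) x_t with α_t ∈ [α_min, α_max], if f^H(x_0) < 0 and {i_0,...,i_{m−1}} = {1,...,d}, then f^H(x_m) − f^H(x_0) ≤ c·f^H(x_0), i.e., f^H(x_m) ≤ (1+c) f^H(x_0). -/

import Mathlib

/-!
A coordinate step along `e_k` with step size `a` lowers `xᵀHx` by `a g² (2 - a H_kk) ≥ a g²`,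
where `g = (Hx)_k` and `a H_kk ≤ 1`, so over `m` steps the quadratic form drops by at least
`α_min ∑ g_t²`. Conversely, the iterates move by at most `α_max ∑ |g_t|`, so each coordinate
of `H x₀` is controlled by the partial derivative observed when that coordinate is visited:
`‖H x₀‖² ≤ d m (1 + ‖H‖ α_max)² ∑ g_t²`, with `‖H‖` the `ℓ∞` operator norm. Finally, if
`μ > 0` is at most the modulus of every negative eigenvalue, then `μ H + H²` is positive
semidefinite, i.e. `‖H x₀‖² ≥ μ (-x₀ᵀ H x₀)`, which turns the drop into a fixed fraction
of `-x₀ᵀ H x₀`.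
-/

open Matrix Finset Filter Topology

lemma exists_pos_forall_mul_add_mul_self_nonneg {s : Set ℝ} (hs : s.Finite) :
    ∃ μ > 0, ∀ x ∈ s, 0 ≤ μ * x + x * x := by
  have h : ∀ x ∈ s, ∀ᶠ μ in 𝓝[>] (0 : ℝ), 0 ≤ μ * x + x * x := by
    intro x _
    rcases le_or_gt 0 x with hx | hx
    · filter_upwards [self_mem_nhdsWithin] with μ (hμ : 0 < μ)
      positivity
    · filter_upwards [nhdsWithin_le_nhds (eventually_lt_nhds (neg_pos.2 hx))] with μ hμ
      nlinarith
  obtain ⟨μ, hμs, hμ⟩ := ((eventually_all_finite hs).2 h).and self_mem_nhdsWithin |>.exists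
  exact ⟨μ, hμ, hμs⟩

lemma exists_mem_Ioo_mul_le {K κ : ℝ} (hK : 0 ≤ K) (hκ : 0 < κ) :
    ∃ c ∈ Set.Ioo (0 : ℝ) 1, c * K ≤ κ := by
  refine ⟨κ / (K + 2 * κ), ⟨by positivity, (div_lt_one (by positivity)).2 (by linarith)⟩, ?_⟩
  rw [div_mul_eq_mul_div, div_le_iff₀ (by positivity)]
  nlinarith

variable {n : Type*} [Fintype n] [DecidableEq n]

open scoped MatrixOrder in
lemma Matrix.IsHermitian.exists_pos_mul_neg_dotProduct_mulVec_le {H : Matrix n n ℝ}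
    (hH : H.IsHermitian) :
    ∃ μ > 0, ∀ y : n → ℝ, μ * -(y ⬝ᵥ (H *ᵥ y)) ≤ (H *ᵥ y) ⬝ᵥ (H *ᵥ y) := by
  obtain ⟨μ, hμ, hspec⟩ := exists_pos_forall_mul_add_mul_self_nonneg
    (hH.spectrum_real_eq_range_eigenvalues ▸ Set.finite_range _)
  have hcfc : cfc (fun x => μ * x + x * x) H = μ • H + H * H := by
    rw [cfc_add .., cfc_const_mul .., cfc_mul .., cfc_id' ℝ H]
  have hpsd : (μ • H + H * H).PosSemidef := hcfc ▸ (cfc_nonneg hspec).posSemidef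
  refine ⟨μ, hμ, fun y => ?_⟩
  have hsq : y ⬝ᵥ (H *ᵥ (H *ᵥ y)) = (H *ᵥ y) ⬝ᵥ (H *ᵥ y) := by
    rw [dotProduct_mulVec, ← mulVec_transpose, (isHermitian_iff_isSymm.1 hH).eq]
  have h := hpsd.dotProduct_mulVec_nonneg y
  rw [star_trivial, add_mulVec, ← mulVec_mulVec, dotProduct_add, smul_mulVec, dotProduct_smul,
    hsq, smul_eq_mul] at h
  linarith

lemma one_sub_smul_single_mul_mulVec {R : Type*} [CommRing R] (H : Matrix n n R) (a : R) (k : n)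
    (v : n → R) :
    (1 - a • (single k k 1 * H)) *ᵥ v = v - Pi.single k (a * (H *ᵥ v) k) := by
  rw [sub_mulVec, one_mulVec, smul_mulVec, ← mulVec_mulVec, single_mulVec_eq, one_mul, smul_smul,
    ← Pi.single_smul, smul_eq_mul, mul_one]

lemma dotProduct_mulVec_sub_single {R : Type*} [CommRing R] {H : Matrix n n R} (hH : H.IsSymm)
    (v : n → R) (k : n) (s : R) :
    (v - Pi.single k s) ⬝ᵥ (H *ᵥ (v - Pi.single k s))
      = v ⬝ᵥ (H *ᵥ v) - 2 * s * (H *ᵥ v) k + s ^ 2 * H k k := by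
  have hsymm : Pi.single k s ⬝ᵥ (H *ᵥ v) = v ⬝ᵥ (H *ᵥ Pi.single k s) := by
    rw [dotProduct_comm, dotProduct_mulVec, ← mulVec_transpose, hH.eq, dotProduct_comm]
  rw [mulVec_sub, sub_dotProduct, dotProduct_sub, dotProduct_sub, ← hsymm, single_dotProduct,
    single_dotProduct, mulVec_single]
  simp only [Pi.smul_apply, col_apply, op_smul_eq_mul]
  ring

lemma mul_sq_le_dotProduct_mulVec_sub {H : Matrix n n ℝ} (hH : H.IsSymm) {a : ℝ} {k : n}
    (ha : 0 ≤ a) (haH : a * H k k ≤ 1) (v : n → ℝ) :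
    a * (H *ᵥ v) k ^ 2 ≤ v ⬝ᵥ (H *ᵥ v)
      - (v - Pi.single k (a * (H *ᵥ v) k)) ⬝ᵥ (H *ᵥ (v - Pi.single k (a * (H *ᵥ v) k))) := by
  rw [dotProduct_mulVec_sub_single hH]
  nlinarith [mul_nonneg (mul_nonneg ha (sq_nonneg ((H *ᵥ v) k))) (sub_nonneg.2 haH)]

/-- Coordinate gradient descent on `x ↦ xᵀHx / 2`, updating coordinate `i t` with step `α t`. -/
def IsCoordinateDescent (H : Matrix n n ℝ) (α : ℕ → ℝ) (i : ℕ → n) (x : ℕ → n → ℝ) : Prop :=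
  ∀ t, x (t + 1) = x t - Pi.single (i t) (α t * (H *ᵥ x t) (i t))

attribute [local instance] Matrix.linftyOpNormedAddCommGroup

section IsCoordinateDescent

variable {H : Matrix n n ℝ} {α : ℕ → ℝ} {i : ℕ → n} {x : ℕ → n → ℝ}

lemma IsCoordinateDescent.mul_sum_sq_le (hx : IsCoordinateDescent H α i x) (hH : H.IsSymm)
    {αmin : ℝ} (hαmin : 0 ≤ αmin) (hα : ∀ t, αmin ≤ α t) (hαH : ∀ t, α t * H (i t) (i t) ≤ 1)
    (m : ℕ) :
    αmin * ∑ t ∈ range m, (H *ᵥ x t) (i t) ^ 2 ≤ x 0 ⬝ᵥ (H *ᵥ x 0) - x m ⬝ᵥ (H *ᵥ x m) := by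
  rw [mul_sum, ← sum_range_sub' (fun t => x t ⬝ᵥ (H *ᵥ x t))]
  refine sum_le_sum fun t _ => ?_
  calc αmin * (H *ᵥ x t) (i t) ^ 2 ≤ α t * (H *ᵥ x t) (i t) ^ 2 := by gcongr; exact hα t
    _ ≤ _ := hx t ▸ mul_sq_le_dotProduct_mulVec_sub hH (hαmin.trans (hα t)) (hαH t) (x t)

lemma IsCoordinateDescent.norm_sub_le (hx : IsCoordinateDescent H α i x) (t : ℕ) :
    ‖x t - x 0‖ ≤ ∑ s ∈ range t, |α s * (H *ᵥ x s) (i s)| := by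
  rw [← dist_eq_norm, dist_comm]
  refine (dist_le_range_sum_dist x t).trans_eq (sum_congr rfl fun s _ => ?_)
  rw [hx s, dist_eq_norm, sub_sub_cancel, Pi.norm_single, Real.norm_eq_abs]

lemma IsCoordinateDescent.abs_mulVec_apply_le (hx : IsCoordinateDescent H α i x) {αmax : ℝ}
    (hα : ∀ t, |α t| ≤ αmax) {m t : ℕ} (ht : t < m) :
    |(H *ᵥ x 0) (i t)| ≤ (1 + ‖H‖ * αmax) * ∑ s ∈ range m, |(H *ᵥ x s) (i s)| := by
  set T := ∑ s ∈ range m, |(H *ᵥ x s) (i s)|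
  have hαmax : 0 ≤ αmax := (abs_nonneg _).trans (hα 0)
  have hgt : |(H *ᵥ x t) (i t)| ≤ T :=
    single_le_sum (f := fun s => |(H *ᵥ x s) (i s)|) (fun _ _ => abs_nonneg _) (mem_range.2 ht)
  have hdisp : ‖x t - x 0‖ ≤ αmax * T := calc
    ‖x t - x 0‖ ≤ ∑ s ∈ range t, αmax * |(H *ᵥ x s) (i s)| :=
      (hx.norm_sub_le t).trans <| sum_le_sum fun s _ => by
        rw [abs_mul]; gcongr; exact hα s
    _ ≤ ∑ s ∈ range m, αmax * |(H *ᵥ x s) (i s)| :=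
      sum_le_sum_of_subset_of_nonneg (range_mono ht.le) fun _ _ _ => by positivity
    _ = αmax * T := (mul_sum _ _ _).symm
  have hdiff : |(H *ᵥ x 0) (i t) - (H *ᵥ x t) (i t)| ≤ ‖H‖ * (αmax * T) := calc
    |(H *ᵥ x 0) (i t) - (H *ᵥ x t) (i t)| = ‖(H *ᵥ (x t - x 0)) (i t)‖ := by
      rw [mulVec_sub, Real.norm_eq_abs, abs_sub_comm, Pi.sub_apply]
    _ ≤ ‖H‖ * ‖x t - x 0‖ := (norm_le_pi_norm _ _).trans (linfty_opNorm_mulVec _ _)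
    _ ≤ ‖H‖ * (αmax * T) := by gcongr
  calc |(H *ᵥ x 0) (i t)| ≤ |(H *ᵥ x t) (i t)| + |(H *ᵥ x 0) (i t) - (H *ᵥ x t) (i t)| :=
        by linarith [abs_sub_abs_le_abs_sub ((H *ᵥ x 0) (i t)) ((H *ᵥ x t) (i t))]
    _ ≤ T + ‖H‖ * (αmax * T) := add_le_add hgt hdiff
    _ = (1 + ‖H‖ * αmax) * T := by ring

lemma IsCoordinateDescent.dotProduct_mulVec_self_le (hx : IsCoordinateDescent H α i x)
    {αmax : ℝ} (hα : ∀ t, |α t| ≤ αmax) {m : ℕ} (hi : ∀ j, ∃ t < m, i t = j) :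
    (H *ᵥ x 0) ⬝ᵥ (H *ᵥ x 0)
      ≤ Fintype.card n * m * (1 + ‖H‖ * αmax) ^ 2 * ∑ t ∈ range m, (H *ᵥ x t) (i t) ^ 2 := by
  set T := ∑ s ∈ range m, |(H *ᵥ x s) (i s)|
  have hcoord : ∀ j, (H *ᵥ x 0) j ^ 2 ≤ ((1 + ‖H‖ * αmax) * T) ^ 2 := fun j => by
    obtain ⟨t, ht, rfl⟩ := hi j
    rw [← sq_abs]
    exact pow_le_pow_left₀ (abs_nonneg _) (hx.abs_mulVec_apply_le hα ht) 2
  have hCS : T ^ 2 ≤ m * ∑ t ∈ range m, (H *ᵥ x t) (i t) ^ 2 := by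
    simpa [sq_abs] using sq_sum_le_card_mul_sum_sq (s := range m) (f := fun t => |(H *ᵥ x t) (i t)|)
  calc (H *ᵥ x 0) ⬝ᵥ (H *ᵥ x 0) = ∑ j, (H *ᵥ x 0) j ^ 2 := by simp only [dotProduct, sq]
    _ ≤ ∑ _j : n, ((1 + ‖H‖ * αmax) * T) ^ 2 := sum_le_sum fun j _ => hcoord j
    _ = Fintype.card n * (1 + ‖H‖ * αmax) ^ 2 * T ^ 2 := by
      rw [sum_const, card_univ, nsmul_eq_mul]; ring
    _ ≤ Fintype.card n * (1 + ‖H‖ * αmax) ^ 2 * (m * ∑ t ∈ range m, (H *ᵥ x t) (i t) ^ 2) := by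
      gcongr
    _ = _ := by ring

end IsCoordinateDescent

theorem stmt_5_general {d m : ℕ}
    (H : Matrix (Fin d) (Fin d) ℝ) (hH : H.IsHermitian)
    (αmin αmax : ℝ) (hαmin : 0 < αmin)
    (hdiag : ∀ j, αmax * |H j j| < 1) :
    ∃ c : ℝ, c ∈ Set.Ioo (0 : ℝ) 1 ∧
      ∀ (α : ℕ → ℝ), (∀ t, α t ∈ Set.Icc αmin αmax) →
      ∀ (i : ℕ → Fin d), (∀ j : Fin d, ∃ t, t < m ∧ i t = j) →
      ∀ (x : ℕ → Fin d → ℝ),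
        (∀ t, x (t + 1) = ((1 : Matrix (Fin d) (Fin d) ℝ)
          - α t • (Matrix.single (i t) (i t) 1 * H)) *ᵥ x t) →
        (1 / 2) * (x 0 ⬝ᵥ (H *ᵥ x 0)) < 0 →
        (1 / 2) * (x m ⬝ᵥ (H *ᵥ x m)) ≤ (1 + c) * ((1 / 2) * (x 0 ⬝ᵥ (H *ᵥ x 0))) := by
  obtain ⟨μ, hμ, hgap⟩ := hH.exists_pos_mul_neg_dotProduct_mulVec_le
  obtain ⟨c, hc, hcK⟩ := exists_mem_Ioo_mul_le (K := d * m * (1 + ‖H‖ * αmax) ^ 2)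
    (by positivity) (mul_pos hμ hαmin)
  refine ⟨c, hc, fun α hα i hi x hx _ => ?_⟩
  have hcd : IsCoordinateDescent H α i x := fun t =>
    (hx t).trans (one_sub_smul_single_mul_mulVec ..)
  have hα0 : ∀ t, 0 ≤ α t := fun t => hαmin.le.trans (hα t).1
  have hαH : ∀ t, α t * H (i t) (i t) ≤ 1 := fun t => calc
    α t * H (i t) (i t) ≤ α t * |H (i t) (i t)| := mul_le_mul_of_nonneg_left (le_abs_self _) (hα0 t)
    _ ≤ αmax * |H (i t) (i t)| := mul_le_mul_of_nonneg_right (hα t).2 (abs_nonneg _)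
    _ ≤ 1 := (hdiag _).le
  set S := ∑ t ∈ range m, (H *ᵥ x t) (i t) ^ 2
  have hdrop := hcd.mul_sum_sq_le (isHermitian_iff_isSymm.1 hH) hαmin.le (fun t => (hα t).1) hαH m
  have hgrad : (H *ᵥ x 0) ⬝ᵥ (H *ᵥ x 0) ≤ d * m * (1 + ‖H‖ * αmax) ^ 2 * S := by
    simpa using hcd.dotProduct_mulVec_self_le
      (fun t => (abs_of_nonneg (hα0 t)).trans_le (hα t).2) hi
  have hS : 0 ≤ S := sum_nonneg fun _ _ => sq_nonneg _
  have key : μ * (c * -(x 0 ⬝ᵥ (H *ᵥ x 0))) ≤ μ * (x 0 ⬝ᵥ (H *ᵥ x 0) - x m ⬝ᵥ (H *ᵥ x m)) := calc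
    μ * (c * -(x 0 ⬝ᵥ (H *ᵥ x 0))) = c * (μ * -(x 0 ⬝ᵥ (H *ᵥ x 0))) := by ring
    _ ≤ c * (d * m * (1 + ‖H‖ * αmax) ^ 2 * S) :=
      mul_le_mul_of_nonneg_left ((hgap _).trans hgrad) hc.1.le
    _ = c * (d * m * (1 + ‖H‖ * αmax) ^ 2) * S := by ring
    _ ≤ μ * αmin * S := by gcongr
    _ ≤ μ * (x 0 ⬝ᵥ (H *ᵥ x 0) - x m ⬝ᵥ (H *ᵥ x m)) := by rw [mul_assoc]; gcongr
  linarith [le_of_mul_le_mul_left key hμ]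

theorem stmt_5 {d m : ℕ} (hm : d ≤ m)
    (H : Matrix (Fin d) (Fin d) ℝ) (hH : H.IsHermitian)
    (hneg : ∃ j, hH.eigenvalues j < 0)
    (αmin αmax : ℝ) (hαmin : 0 < αmin) (hαle : αmin ≤ αmax)
    (hdiag : ∀ j, αmax * |H j j| < 1) :
    ∃ c : ℝ, c ∈ Set.Ioo (0 : ℝ) 1 ∧
      ∀ (α : ℕ → ℝ), (∀ t, α t ∈ Set.Icc αmin αmax) →
      ∀ (i : ℕ → Fin d), (∀ j : Fin d, ∃ t, t < m ∧ i t = j) →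
      ∀ (x : ℕ → Fin d → ℝ),
        (∀ t, x (t + 1) = ((1 : Matrix (Fin d) (Fin d) ℝ)
          - α t • (Matrix.single (i t) (i t) 1 * H)) *ᵥ x t) →
        (1 / 2) * (x 0 ⬝ᵥ (H *ᵥ x 0)) < 0 →
        (1 / 2) * (x m ⬝ᵥ (H *ᵥ x m)) ≤ (1 + c) * ((1 / 2) * (x 0 ⬝ᵥ (H *ᵥ x 0))) :=
  stmt_5_general H hH αmin αmax hαmin hdiag
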